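/- Let φ be RO-varying at +∞ and s₀ < σ₀(φ), s₁ > σ₁(φ). Define ψ(t) := t^{-s₀/(s₁-s₀)} φ(t^{1/(s₁-s₀)}) for t ≥ 1 and ψ(t) := φ(1) for 0 < t < 1. Then ψ : (0,∞) → (0,∞) is Borel measurable, bounded on every compact interval [a,b] ⊂ (0,∞), and 1/ψ is bounded on every interval [r,∞) with r > 0. -/
import Mathlib


/-- φ : [1,∞) → (0,∞) is RO-varying at +∞ (two-sided power-bound form): Borel measurable,
positive, and c⁻¹ λ^{s₀} ≤ φ(λt)/φ(t) ≤ c λ^{s₁} for some c ≥ 1, s₀, s₁ ∈ ℝ and all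
t ≥ 1, λ ≥ 1. -/
def ROVarying (φ : ℝ → ℝ) : Prop :=
  Measurable φ ∧ (∀ t, 1 ≤ t → 0 < φ t) ∧
    ∃ c : ℝ, 1 ≤ c ∧ ∃ s₀ s₁ : ℝ,
      ∀ t, 1 ≤ t → ∀ l, 1 ≤ l →
        c⁻¹ * l ^ s₀ ≤ φ (l * t) / φ t ∧ φ (l * t) / φ t ≤ c * l ^ s₁

/-- Exponents s₀ admissible in the lower bound c⁻¹λ^{s₀} ≤ φ(λt)/φ(t). -/
def lowerExponents (φ : ℝ → ℝ) : Set ℝ :=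
  {s₀ | ∃ c : ℝ, 1 ≤ c ∧ ∀ t, 1 ≤ t → ∀ l, 1 ≤ l → c⁻¹ * l ^ s₀ ≤ φ (l * t) / φ t}

/-- Exponents s₁ admissible in the upper bound φ(λt)/φ(t) ≤ cλ^{s₁}. -/
def upperExponents (φ : ℝ → ℝ) : Set ℝ :=
  {s₁ | ∃ c : ℝ, 1 ≤ c ∧ ∀ t, 1 ≤ t → ∀ l, 1 ≤ l → φ (l * t) / φ t ≤ c * l ^ s₁}

/-- Lower Matuszewska index σ₀(φ). -/
noncomputable def sigma0 (φ : ℝ → ℝ) : ℝ := sSup (lowerExponents φ)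

/-- Upper Matuszewska index σ₁(φ). -/
noncomputable def sigma1 (φ : ℝ → ℝ) : ℝ := sInf (upperExponents φ)

/-- The interpolation parameter ψ built from φ and s₀ < s₁:
ψ(t) = t^{-s₀/(s₁-s₀)} φ(t^{1/(s₁-s₀)}) for t ≥ 1 and ψ(t) = φ(1) for 0 < t < 1. -/
noncomputable def interpParam (φ : ℝ → ℝ) (s₀ s₁ : ℝ) (t : ℝ) : ℝ :=
  if 1 ≤ t then t ^ (-s₀ / (s₁ - s₀)) * φ (t ^ (1 / (s₁ - s₀))) else φ 1

lemma lower_le_upper {φ : ℝ → ℝ} (hφ1 : 0 < φ 1) {a b : ℝ}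
    (ha : a ∈ lowerExponents φ) (hb : b ∈ upperExponents φ) : a ≤ b := by
  obtain ⟨ca, hca, hA⟩ := ha
  obtain ⟨cb, hcb, hB⟩ := hb
  by_contra hab
  push_neg at hab
  have hd : 0 < a - b := by linarith
  set L : ℝ := max 1 ((ca * cb + 1) ^ (a - b)⁻¹) with hL
  have hL1 : 1 ≤ L := le_max_left _ _
  have hL0 : (0:ℝ) < L := lt_of_lt_of_le one_pos hL1
  have h1 : ca⁻¹ * L ^ a ≤ φ (L * 1) / φ 1 := hA 1 le_rfl L hL1
  have h2 : φ (L * 1) / φ 1 ≤ cb * L ^ b := hB 1 le_rfl L hL1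
  have h3 : ca⁻¹ * L ^ a ≤ cb * L ^ b := h1.trans h2
  have hca0 : (0:ℝ) < ca := lt_of_lt_of_le one_pos hca
  have key : L ^ (a - b) ≤ ca * cb := by
    have : L ^ a ≤ ca * cb * L ^ b := by
      rw [inv_mul_le_iff₀ hca0] at h3
      calc L ^ a ≤ ca * (cb * L ^ b) := h3
        _ = ca * cb * L ^ b := by ring
    rw [Real.rpow_sub hL0, div_le_iff₀ (Real.rpow_pos_of_pos hL0 b)]
    exact this
  have hcc : (0:ℝ) < ca * cb + 1 := by positivity
  have hLe : ca * cb + 1 ≤ L ^ (a - b) := by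
    have h4 : ((ca * cb + 1) ^ (a - b)⁻¹) ^ (a - b) = ca * cb + 1 := by
      rw [← Real.rpow_mul hcc.le, inv_mul_cancel₀ hd.ne', Real.rpow_one]
    calc ca * cb + 1 = ((ca * cb + 1) ^ (a - b)⁻¹) ^ (a - b) := h4.symm
      _ ≤ L ^ (a - b) :=
        Real.rpow_le_rpow (Real.rpow_nonneg hcc.le _) (le_max_right _ _) hd.le
  linarith

lemma lower_mono {φ : ℝ → ℝ} {a a' : ℝ} (h : a' ∈ lowerExponents φ) (hle : a ≤ a') :
    a ∈ lowerExponents φ := by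
  obtain ⟨c, hc, hA⟩ := h
  refine ⟨c, hc, fun t ht l hl => le_trans ?_ (hA t ht l hl)⟩
  have : l ^ a ≤ l ^ a' := Real.rpow_le_rpow_of_exponent_le hl hle
  have hc0 : (0:ℝ) ≤ c⁻¹ := by positivity
  exact mul_le_mul_of_nonneg_left this hc0

lemma upper_mono {φ : ℝ → ℝ} {b b' : ℝ} (h : b' ∈ upperExponents φ) (hle : b' ≤ b) :
    b ∈ upperExponents φ := by
  obtain ⟨c, hc, hB⟩ := h
  refine ⟨c, hc, fun t ht l hl => le_trans (hB t ht l hl) ?_⟩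
  have : l ^ b' ≤ l ^ b := Real.rpow_le_rpow_of_exponent_le hl hle
  have hc0 : (0:ℝ) ≤ c := by linarith
  exact mul_le_mul_of_nonneg_left this hc0

/-- for φ RO-varying with s₀ < σ₀(φ), s₁ > σ₁(φ), the function ψ is Borel
measurable, positive on (0,∞), bounded on every compact interval [a,b] ⊂ (0,∞), and 1/ψ
is bounded on every [r,∞) with r > 0 (that is, ψ belongs to the class 𝓑). -/
theorem interpParam_mem_B (φ : ℝ → ℝ) (hφ : ROVarying φ)
    (s₀ s₁ : ℝ) (hs₀ : s₀ < sigma0 φ) (hs₁ : sigma1 φ < s₁) :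
    Measurable (interpParam φ s₀ s₁) ∧
      (∀ t, 0 < t → 0 < interpParam φ s₀ s₁ t) ∧
      (∀ a b : ℝ, 0 < a → a ≤ b →
        ∃ M : ℝ, ∀ t ∈ Set.Icc a b, interpParam φ s₀ s₁ t ≤ M) ∧
      (∀ r : ℝ, 0 < r → ∃ M : ℝ, ∀ t, r ≤ t → (interpParam φ s₀ s₁ t)⁻¹ ≤ M) := by
  obtain ⟨hmeas, hpos, c, hc, s₀', s₁', hb2⟩ := hφ
  have hφ1 : 0 < φ 1 := hpos 1 le_rfl
  have hlow' : s₀' ∈ lowerExponents φ := ⟨c, hc, fun t ht l hl => (hb2 t ht l hl).1⟩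
  have hup' : s₁' ∈ upperExponents φ := ⟨c, hc, fun t ht l hl => (hb2 t ht l hl).2⟩
  have hbddA : BddAbove (lowerExponents φ) :=
    ⟨s₁', fun a ha => lower_le_upper hφ1 ha hup'⟩
  have hbddB : BddBelow (upperExponents φ) :=
    ⟨s₀', fun b hb => lower_le_upper hφ1 hlow' hb⟩
  obtain ⟨a', ha'mem, ha'⟩ := exists_lt_of_lt_csSup ⟨s₀', hlow'⟩ hs₀
  obtain ⟨b', hb'mem, hb'⟩ := exists_lt_of_csInf_lt ⟨s₁', hup'⟩ hs₁
  have hs0mem : s₀ ∈ lowerExponents φ := lower_mono ha'mem ha'.le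
  have hs1mem : s₁ ∈ upperExponents φ := upper_mono hb'mem hb'.le
  have hlt : s₀ < s₁ := lt_of_lt_of_le ha' (lower_le_upper hφ1 ha'mem hs1mem)
  have hd : (0:ℝ) < s₁ - s₀ := by linarith
  obtain ⟨c₀, hc₀, h₀⟩ := hs0mem
  obtain ⟨c₁, hc₁, h₁⟩ := hs1mem
  have hc₀0 : (0:ℝ) < c₀ := lt_of_lt_of_le one_pos hc₀
  have hc₁0 : (0:ℝ) < c₁ := lt_of_lt_of_le one_pos hc₁
  -- basic facts for t ≥ 1
  have hu : ∀ t : ℝ, 1 ≤ t → 1 ≤ t ^ (1 / (s₁ - s₀)) := fun t ht =>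
    Real.one_le_rpow ht (by positivity)
  have hupow : ∀ (t : ℝ), 1 ≤ t → ∀ e : ℝ,
      (t ^ (1 / (s₁ - s₀))) ^ e = t ^ (e / (s₁ - s₀)) := by
    intro t ht e
    rw [← Real.rpow_mul (by linarith : (0:ℝ) ≤ t)]
    ring_nf
  have hcancel : ∀ t : ℝ, 1 ≤ t →
      t ^ (-s₀ / (s₁ - s₀)) * t ^ (s₀ / (s₁ - s₀)) = 1 := by
    intro t ht
    rw [← Real.rpow_add (by linarith : (0:ℝ) < t)]
    rw [show -s₀ / (s₁ - s₀) + s₀ / (s₁ - s₀) = 0 by ring, Real.rpow_zero]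
  -- lower bound on [1, ∞)
  have hlb : ∀ t : ℝ, 1 ≤ t → c₀⁻¹ * φ 1 ≤ interpParam φ s₀ s₁ t := by
    intro t ht
    have ht0 : (0:ℝ) < t := by linarith
    set u := t ^ (1 / (s₁ - s₀)) with hu_def
    have hu1 : 1 ≤ u := hu t ht
    have h := h₀ 1 le_rfl u hu1
    rw [mul_one, le_div_iff₀ hφ1] at h
    have hφu : c₀⁻¹ * t ^ (s₀ / (s₁ - s₀)) * φ 1 ≤ φ u := by
      rwa [hupow t ht s₀] at h
    have hA : (0:ℝ) < t ^ (-s₀ / (s₁ - s₀)) := Real.rpow_pos_of_pos ht0 _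
    have key : t ^ (-s₀ / (s₁ - s₀)) * (c₀⁻¹ * t ^ (s₀ / (s₁ - s₀)) * φ 1)
        ≤ t ^ (-s₀ / (s₁ - s₀)) * φ u := mul_le_mul_of_nonneg_left hφu hA.le
    have heq : t ^ (-s₀ / (s₁ - s₀)) * (c₀⁻¹ * t ^ (s₀ / (s₁ - s₀)) * φ 1)
        = c₀⁻¹ * φ 1 := by
      have := hcancel t ht
      calc t ^ (-s₀ / (s₁ - s₀)) * (c₀⁻¹ * t ^ (s₀ / (s₁ - s₀)) * φ 1)
          = (t ^ (-s₀ / (s₁ - s₀)) * t ^ (s₀ / (s₁ - s₀))) * (c₀⁻¹ * φ 1) := by ring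
        _ = c₀⁻¹ * φ 1 := by rw [this, one_mul]
    rw [interpParam, if_pos ht]
    calc c₀⁻¹ * φ 1 = _ := heq.symm
      _ ≤ _ := key
  -- upper bound on [1, ∞)
  have hub : ∀ t : ℝ, 1 ≤ t → interpParam φ s₀ s₁ t ≤ c₁ * φ 1 * t := by
    intro t ht
    have ht0 : (0:ℝ) < t := by linarith
    set u := t ^ (1 / (s₁ - s₀)) with hu_def
    have hu1 : 1 ≤ u := hu t ht
    have h := h₁ 1 le_rfl u hu1
    rw [mul_one, div_le_iff₀ hφ1] at h
    have hφu : φ u ≤ c₁ * t ^ (s₁ / (s₁ - s₀)) * φ 1 := by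
      rwa [hupow t ht s₁] at h
    have hA : (0:ℝ) < t ^ (-s₀ / (s₁ - s₀)) := Real.rpow_pos_of_pos ht0 _
    have key : t ^ (-s₀ / (s₁ - s₀)) * φ u
        ≤ t ^ (-s₀ / (s₁ - s₀)) * (c₁ * t ^ (s₁ / (s₁ - s₀)) * φ 1) :=
      mul_le_mul_of_nonneg_left hφu hA.le
    have hsum : t ^ (-s₀ / (s₁ - s₀)) * t ^ (s₁ / (s₁ - s₀)) = t := by
      rw [← Real.rpow_add ht0,
        show -s₀ / (s₁ - s₀) + s₁ / (s₁ - s₀) = 1 by field_simp; ring, Real.rpow_one]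
    have heq : t ^ (-s₀ / (s₁ - s₀)) * (c₁ * t ^ (s₁ / (s₁ - s₀)) * φ 1)
        = c₁ * φ 1 * t := by
      calc t ^ (-s₀ / (s₁ - s₀)) * (c₁ * t ^ (s₁ / (s₁ - s₀)) * φ 1)
          = (t ^ (-s₀ / (s₁ - s₀)) * t ^ (s₁ / (s₁ - s₀))) * (c₁ * φ 1) := by ring
        _ = c₁ * φ 1 * t := by rw [hsum]; ring
    rw [interpParam, if_pos ht]
    exact key.trans heq.le
  refine ⟨?_, ?_, ?_, ?_⟩
  · -- measurability
    have h1 : Measurable fun t : ℝ =>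
        t ^ (-s₀ / (s₁ - s₀)) * φ (t ^ (1 / (s₁ - s₀))) :=
      (measurable_id.pow measurable_const).mul
        (hmeas.comp (measurable_id.pow measurable_const))
    exact Measurable.ite measurableSet_Ici h1 measurable_const
  · -- positivity
    intro t ht
    by_cases h1 : 1 ≤ t
    · rw [interpParam, if_pos h1]
      exact mul_pos (Real.rpow_pos_of_pos ht _) (hpos _ (hu t h1))
    · rw [interpParam, if_neg h1]; exact hφ1
  · -- bounded above on compacts
    intro a b ha hab
    refine ⟨max (φ 1) (c₁ * φ 1 * b), fun t ht => ?_⟩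
    by_cases h1 : 1 ≤ t
    · refine le_trans ((hub t h1).trans ?_) (le_max_right _ _)
      have : t ≤ b := ht.2
      have hcb : (0:ℝ) ≤ c₁ * φ 1 := by positivity
      exact mul_le_mul_of_nonneg_left this hcb
    · rw [interpParam, if_neg h1]; exact le_max_left _ _
  · -- inverse bounded on [r, ∞)
    intro r hr
    refine ⟨max (φ 1)⁻¹ (c₀ * (φ 1)⁻¹), fun t ht => ?_⟩
    by_cases h1 : 1 ≤ t
    · have hlbt := hlb t h1
      have hp : (0:ℝ) < c₀⁻¹ * φ 1 := by positivity
      have : (interpParam φ s₀ s₁ t)⁻¹ ≤ (c₀⁻¹ * φ 1)⁻¹ :=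
        inv_anti₀ hp hlbt
      refine le_trans this (le_trans (le_of_eq ?_) (le_max_right _ _))
      rw [mul_inv, inv_inv]
    · rw [interpParam, if_neg h1]; exact le_max_left _ _
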